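/- Let s ∈ (0,1), α > 2s, and φ ∈ L^∞(ℝ) ∩ C^α_loc(ℝ) satisfy (-Δ)^s φ + d φ ≤ 0 on ℝ \ [-L, L], where d(x) ≥ δ > 0 for |x| > L, and φ ≤ 0 on [-L, L]. Then φ ≤ 0 on all of ℝ. -/

import Mathlib

open Real MeasureTheory Filter Topology

/-- One-dimensional fractional Laplacian of order `2s`, in its symmetrized form. -/
noncomputable def fracLap (s : ℝ) (v : ℝ → ℝ) (x : ℝ) : ℝ :=
  (1/2) * ∫ z : ℝ, (2 * v x - v (x + z) - v (x - z)) / |z| ^ (1 + 2*s)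


section AuxLemmas


lemma aux_log (x z : ℝ) :
    Real.log (1+(x+z)^2) + Real.log (1+(x-z)^2) - 2*Real.log (1+x^2)
      ≤ 2*Real.log (1+z^2) := by
  have h1 : (0:ℝ) < 1 + (x+z)^2 := by positivity
  have h2 : (0:ℝ) < 1 + (x-z)^2 := by positivity
  have h3 : (0:ℝ) < 1 + x^2 := by positivity
  have h4 : (0:ℝ) < 1 + z^2 := by positivity
  have key : (1 + (x+z)^2) * (1 + (x-z)^2) ≤ ((1+x^2) * (1+z^2))^2 := by
    have e : ((1+x^2)*(1+z^2))^2 - (1+(x+z)^2)*(1+(x-z)^2)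
        = x^4*z^4 + 2*x^4*z^2 + 2*x^2*z^4 + 6*x^2*z^2 := by ring
    have hp : (0:ℝ) ≤ x^4*z^4 + 2*x^4*z^2 + 2*x^2*z^4 + 6*x^2*z^2 := by positivity
    linarith
  have h5 := Real.log_le_log (by positivity) key
  rw [Real.log_mul h1.ne' h2.ne', Real.log_pow, Real.log_mul h3.ne' h4.ne'] at h5
  push_cast at h5
  linarith

section
open Set

lemma aux_int (s : ℝ) (hs0 : 0 < s) (hs1 : s < 1) :
    Integrable (fun z : ℝ => 2 * Real.log (1+z^2) / |z| ^ (1+2*s)) := by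
  set F : ℝ → ℝ := fun z => 2 * Real.log (1+z^2) / |z| ^ (1+2*s) with hF
  have hnum : Continuous (fun z : ℝ => 2 * Real.log (1+z^2)) := by
    have : Continuous (fun z : ℝ => Real.log (1+z^2)) :=
      Continuous.log (by continuity) (fun z => by positivity)
    exact continuous_const.mul this
  have hden : Continuous (fun z : ℝ => |z| ^ (1+2*s)) :=
    (Real.continuous_rpow_const (by positivity)).comp continuous_abs
  have hFmeas : Measurable F := hnum.measurable.div hden.measurable
  have hFnn : ∀ z, 0 ≤ F z := by
    intro z
    apply div_nonneg _ (Real.rpow_nonneg (abs_nonneg z) _)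
    have : (0:ℝ) ≤ Real.log (1+z^2) := Real.log_nonneg (by nlinarith [sq_nonneg z])
    linarith
  -- on Ioc 0 1
  have h01 : IntegrableOn F (Ioc 0 1) := by
    have hg : IntegrableOn (fun z : ℝ => 2 * z ^ (1-2*s)) (Ioc 0 1) := by
      have := intervalIntegral.intervalIntegrable_rpow' (a := 0) (b := 1) (r := 1-2*s)
        (by linarith)
      exact ((intervalIntegrable_iff_integrableOn_Ioc_of_le zero_le_one).mp this).const_mul 2
    refine Integrable.mono' hg (hFmeas.aestronglyMeasurable.restrict) ?_
    refine (ae_restrict_iff' measurableSet_Ioc).mpr (ae_of_all _ fun z hz => ?_)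
    obtain ⟨hz0, hz1⟩ := hz
    rw [Real.norm_of_nonneg (hFnn z)]
    have habs : |z| = z := abs_of_pos hz0
    have hlog : Real.log (1+z^2) ≤ z^2 := by
      have := Real.log_le_sub_one_of_pos (show (0:ℝ) < 1+z^2 by positivity)
      linarith
    have hzp : (0:ℝ) < z ^ (1+2*s) := Real.rpow_pos_of_pos hz0 _
    rw [hF]
    simp only [habs]
    rw [div_le_iff₀ hzp]
    have h2 : z ^ ((1:ℝ)-2*s) * z ^ (1+2*s) = z^2 := by
      rw [← Real.rpow_add hz0, show (1:ℝ)-2*s+(1+2*s) = 2 by ring,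
        show (2:ℝ) = ((2:ℕ):ℝ) by norm_num, Real.rpow_natCast]
    nlinarith [hlog, hzp.le]
  -- on Ioi 1
  have h1i : IntegrableOn F (Ioi 1) := by
    set C : ℝ := 2 * (Real.log 2 + 2/s) with hC
    have hg : IntegrableOn (fun z : ℝ => C * z ^ (-1-s)) (Ioi 1) :=
      (integrableOn_Ioi_rpow_of_lt (by linarith) one_pos).const_mul C
    refine Integrable.mono' hg (hFmeas.aestronglyMeasurable.restrict) ?_
    refine (ae_restrict_iff' measurableSet_Ioi).mpr (ae_of_all _ fun z hz => ?_)
    rw [Set.mem_Ioi] at hz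
    have hz0 : (0:ℝ) < z := by linarith
    have habs : |z| = z := abs_of_pos hz0
    rw [Real.norm_of_nonneg (hFnn z), hF]
    simp only [habs]
    have hzs1 : (1:ℝ) ≤ z ^ s := Real.one_le_rpow hz.le hs0.le
    have hlogz : Real.log z ≤ z ^ s / s := by
      have h1 : Real.log (z ^ s) ≤ z ^ s - 1 := Real.log_le_sub_one_of_pos (by positivity)
      rw [Real.log_rpow hz0] at h1
      rw [le_div_iff₀ hs0]
      nlinarith
    have hl2 : (0:ℝ) ≤ Real.log 2 := Real.log_nonneg one_le_two
    have hlog : Real.log (1+z^2) ≤ (Real.log 2 + 2/s) * z ^ s := by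
      have h2 : (1:ℝ)+z^2 ≤ 2*z^2 := by nlinarith
      have h3 : Real.log (1+z^2) ≤ Real.log (2*z^2) := Real.log_le_log (by positivity) h2
      rw [Real.log_mul two_ne_zero (by positivity), Real.log_pow] at h3
      push_cast at h3
      have h5 : Real.log 2 * 1 ≤ Real.log 2 * z ^ s := mul_le_mul_of_nonneg_left hzs1 hl2
      have h6 : 2 * Real.log z ≤ 2 * (z ^ s / s) := by linarith
      have h7 : 2 * (z ^ s / s) = 2/s * z ^ s := by ring
      nlinarith
    have hzp : (0:ℝ) < z ^ (1+2*s) := Real.rpow_pos_of_pos hz0 _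
    rw [div_le_iff₀ hzp]
    have h4 : C * z ^ (-1-s) * z ^ (1+2*s) = C * z ^ s := by
      rw [mul_assoc, ← Real.rpow_add hz0, show (-1:ℝ)-s+(1+2*s) = s by ring]
    rw [h4, hC]
    nlinarith [hlog]
  have hIoi : IntegrableOn F (Ioi 0) := by
    rw [show Ioi (0:ℝ) = Ioc 0 1 ∪ Ioi 1 from (Set.Ioc_union_Ioi_eq_Ioi zero_le_one).symm]
    exact h01.union h1i
  have hIci : IntegrableOn F (Ici 0) :=
    hIoi.congr_set_ae (Filter.EventuallyEq.symm Ioi_ae_eq_Ici)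
  have hIio : IntegrableOn F (Iio 0) := by
    have heven : ∀ t : ℝ, F (-t) = F t := by
      intro t; rw [hF]; simp [neg_sq]
    have h1 : Integrable (Set.indicator (Ioi 0) F) :=
      (integrable_indicator_iff measurableSet_Ioi).mpr hIoi
    have h2 := h1.comp_neg
    have h3 : (fun t => Set.indicator (Ioi (0:ℝ)) F (-t)) = Set.indicator (Iio 0) F := by
      funext t
      by_cases ht : t < 0
      · rw [Set.indicator_of_mem (by simpa using ht), Set.indicator_of_mem (Set.mem_Iio.mpr ht),
          heven]
      · rw [Set.indicator_of_notMem (by simpa using ht),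
          Set.indicator_of_notMem (by simpa using ht)]
    rw [h3] at h2
    exact (integrable_indicator_iff measurableSet_Iio).mp h2
  have hall : IntegrableOn F (Iio 0 ∪ Ici 0) := hIio.union hIci
  rwa [Set.Iio_union_Ici, integrableOn_univ] at hall

end

end AuxLemmas

/-- Maximum principle outside a compact set: a bounded, locally `C^α` (`α > 2s`)
subsolution of `(-Δ)^s φ + d φ ≤ 0` on `ℝ \ [-L,L]` with `d ≥ δ > 0` there, which is
non-positive on `[-L,L]`, is non-positive on all of `ℝ`. -/
theorem stmt_11 (s : ℝ) (hs0 : 0 < s) (hs1 : s < 1) (α : NNReal) (hα : 2*s < (α:ℝ))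
    (δ L : ℝ) (hδ : 0 < δ) (hL : 0 < L)
    (d : ℝ → ℝ) (hd : ∀ x : ℝ, L < |x| → δ ≤ d x)
    (φ : ℝ → ℝ) (hbdd : ∃ M : ℝ, ∀ x : ℝ, |φ x| ≤ M)
    (hHol : ∀ a b : ℝ, a < b → ∃ C : NNReal, HolderOnWith C α φ (Set.Icc a b))
    (hwd : ∀ x : ℝ, L < |x| →
      Integrable (fun z : ℝ => (2 * φ x - φ (x + z) - φ (x - z)) / |z| ^ (1 + 2*s)))
    (hsub : ∀ x : ℝ, L < |x| → fracLap s φ x + d x * φ x ≤ 0)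
    (hneg : ∀ x ∈ Set.Icc (-L) L, φ x ≤ 0) :
    ∀ x : ℝ, φ x ≤ 0 := by
  by_contra hcon
  push_neg at hcon
  obtain ⟨x₀, hx₀⟩ := hcon
  obtain ⟨M, hM⟩ := hbdd
  -- the barrier
  set g : ℝ → ℝ := fun x => Real.log (1+x^2) with hgdef
  have hgc : Continuous g :=
    Continuous.log (by continuity) (fun z => by positivity)
  have hg0 : ∀ x, 0 ≤ g x := fun x => Real.log_nonneg (by nlinarith [sq_nonneg x])
  -- continuity of φ
  have hφc : Continuous φ := by
    rw [continuous_iff_continuousAt]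
    intro x
    obtain ⟨C, hC⟩ := hHol (x-1) (x+1) (by linarith)
    have hα0 : 0 < α := by
      have h0 : (0:ℝ) < (α:ℝ) := lt_of_le_of_lt (by positivity) hα
      exact_mod_cast h0
    exact (hC.continuousOn hα0).continuousAt (Icc_mem_nhds (by linarith) (by linarith))
  -- the majorant kernel
  set F : ℝ → ℝ := fun z => 2 * Real.log (1+z^2) / |z| ^ (1+2*s) with hFdef
  have hFint : Integrable F := aux_int s hs0 hs1
  have hF0 : ∀ z, 0 ≤ F z := fun z =>
    div_nonneg (by
      have : (0:ℝ) ≤ Real.log (1+z^2) := Real.log_nonneg (by nlinarith [sq_nonneg z])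
      linarith) (Real.rpow_nonneg (abs_nonneg z) _)
  set K : ℝ := ∫ z, F z with hKdef
  have hK0 : 0 ≤ K := hKdef ▸ integral_nonneg hF0
  clear_value K
  -- choice of ε
  set c : ℝ := K/2 + δ * g x₀ with hcdef
  have hc0 : 0 ≤ c := by
    rw [hcdef]
    have := mul_nonneg hδ.le (hg0 x₀)
    linarith
  clear_value c
  set ε : ℝ := δ * φ x₀ / (c+1) with hεdef
  have hε0 : 0 < ε := by
    rw [hεdef]
    exact div_pos (mul_pos hδ hx₀) (by linarith)
  have hεc : ε * c < δ * φ x₀ := by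
    have h1 : ε * (c+1) = δ * φ x₀ := by
      rw [hεdef]
      exact div_mul_cancel₀ _ (by linarith)
    linarith
  clear_value ε
  set ψ : ℝ → ℝ := fun x => φ x - ε * g x with hψdef
  have hψc : Continuous ψ := hφc.sub (continuous_const.mul hgc)
  have hψ₀ : 0 < ψ x₀ := by
    have e : ε * c = ε * (K/2) + δ * (ε * g x₀) := by rw [hcdef]; ring
    have h1 : 0 ≤ ε * (K/2) := mul_nonneg hε0.le (by linarith)
    have h2 : δ * (ε * g x₀) < δ * φ x₀ := by linarith
    have h3 : ε * g x₀ < φ x₀ := lt_of_mul_lt_mul_left h2 hδ.le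
    simp only [hψdef]
    linarith
  -- choice of R
  set T : ℝ := (M - ψ x₀)/ε with hTdef
  clear_value T
  set R : ℝ := 1 + max |x₀| (max L (Real.exp T)) with hRdef
  clear_value R
  have hRx₀ : |x₀| < R := by
    have := le_max_left |x₀| (max L (Real.exp T)); simp only [hRdef]; linarith
  have hRL : L < R := by
    have h1 := le_max_left L (Real.exp T)
    have h2 := le_max_right |x₀| (max L (Real.exp T))
    simp only [hRdef]; linarith
  have hRT : Real.exp T < R := by
    have h1 := le_max_right L (Real.exp T)
    have h2 := le_max_right |x₀| (max L (Real.exp T))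
    simp only [hRdef]; linarith
  have hR0 : 0 < R := lt_of_le_of_lt (abs_nonneg x₀) hRx₀
  have hout : ∀ y : ℝ, R ≤ |y| → ψ y < ψ x₀ := by
    intro y hy
    have hTg : T < g y := by
      have h1 : Real.exp T < 1 + y^2 := by
        have h2 : |y| ≤ 1 + y^2 := by nlinarith [sq_nonneg (|y| - 1), sq_abs y]
        linarith [lt_of_lt_of_le hRT (le_trans hy h2)]
      have := Real.log_lt_log (Real.exp_pos T) h1
      rwa [Real.log_exp] at this
    have hφy : φ y ≤ M := le_trans (le_abs_self _) (hM y)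
    have : ψ y < M - ε * T := by
      have := mul_lt_mul_of_pos_left hTg hε0
      simp only [hψdef]; linarith
    have hMT : M - ε * T = ψ x₀ := by
      rw [hTdef]
      field_simp
      ring
    linarith [hMT ▸ this]
  -- maximum point
  obtain ⟨w, hwmem, hwmax⟩ := (isCompact_Icc : IsCompact (Set.Icc (-R) R)).exists_isMaxOn
    ⟨0, by constructor <;> linarith⟩ hψc.continuousOn
  have hx₀mem : x₀ ∈ Set.Icc (-R) R := by
    have := abs_le.mp hRx₀.le; exact ⟨this.1, this.2⟩
  have hglob : ∀ y, ψ y ≤ ψ w := by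
    intro y
    by_cases hy : y ∈ Set.Icc (-R) R
    · exact hwmax hy
    · have hRy : R ≤ |y| := by
        by_contra h
        push_neg at h
        exact hy (abs_le.mp h.le)
      exact le_trans (hout y hRy).le (hwmax hx₀mem)
  have hψw : 0 < ψ w := lt_of_lt_of_le hψ₀ (hwmax hx₀mem)
  have hφw : 0 < φ w := by
    have := mul_nonneg hε0.le (hg0 w)
    simp only [hψdef] at hψw; linarith
  have hwL : L < |w| := by
    by_contra h
    push_neg at h
    exact absurd (hneg w (abs_le.mp h)) (not_le.mpr hφw)
  -- pointwise kernel bound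
  have hpt : ∀ z : ℝ, (-ε) * F z ≤ (2 * φ w - φ (w + z) - φ (w - z)) / |z| ^ (1 + 2*s) := by
    intro z
    rcases eq_or_ne z 0 with rfl | hz
    · have h0 : 2 * φ w - φ (w + 0) - φ (w - 0) = 0 := by simp; ring
      rw [h0, zero_div]
      simp [hFdef]
    · have hzp : (0:ℝ) < |z| ^ (1+2*s) := Real.rpow_pos_of_pos (abs_pos.mpr hz) _
      have hLHS : (-ε) * F z = (-(ε * (2 * Real.log (1+z^2)))) / |z| ^ (1+2*s) := by
        simp only [hFdef]; ring
      rw [hLHS, div_le_div_iff_of_pos_right hzp]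
      have h1 := hglob (w+z)
      have h2 := hglob (w-z)
      simp only [hψdef] at h1 h2
      have h3 := aux_log w z
      have h4 := mul_le_mul_of_nonneg_left h3 hε0.le
      simp only [hgdef] at h1 h2
      ring_nf at h1 h2 h4 ⊢
      linarith
  -- integral bound
  have hintw := hwd w hwL
  have hmono : ∫ z, (-ε) * F z ≤ ∫ z, (2 * φ w - φ (w + z) - φ (w - z)) / |z| ^ (1 + 2*s) :=
    integral_mono (hFint.const_mul _) hintw hpt
  rw [MeasureTheory.integral_const_mul, ← hKdef] at hmono
  have hfrac : (1/2 : ℝ) * ((-ε) * K) ≤ fracLap s φ w := by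
    rw [fracLap]
    apply mul_le_mul_of_nonneg_left _ (by norm_num : (0:ℝ) ≤ 1/2)
    exact hmono
  -- conclude
  have hsubw := hsub w hwL
  have hdφ : δ * φ w ≤ d w * φ w := mul_le_mul_of_nonneg_right (hd w hwL) hφw.le
  have hφwlb : φ x₀ - ε * g x₀ ≤ φ w := by
    have h1 := hglob x₀
    have h2 := mul_nonneg hε0.le (hg0 w)
    simp only [hψdef] at h1
    linarith
  have hexp : ε * c = ε * (K/2) + δ * (ε * g x₀) := by rw [hcdef]; ring
  have h5 : δ * (φ x₀ - ε * g x₀) ≤ δ * φ w := mul_le_mul_of_nonneg_left hφwlb hδ.le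
  have h6 : δ * (φ x₀ - ε * g x₀) = δ * φ x₀ - δ * (ε * g x₀) := by ring
  have e1 : (1/2:ℝ) * ((-ε) * K) = -(ε * (K/2)) := by ring
  linarith [hsubw, hfrac, hdφ, h5, h6, hεc, hexp, e1]
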